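/- arXiv:1406.1216 — 3 statements merged into one kernel-verified Lean document; each statement's English description precedes it below -/
import Mathlib

section
/- Let A and B be two symmetric n×n matrices with real entries. Then for any complex number z = x + iy with y ≠ 0, the Stieltjes transforms S_A(z) = (1/n)Tr((A - zI)^{-1}) and S_B(z) = (1/n)Tr((B - zI)^{-1}) satisfy |S_A(z) - S_B(z)| ≤ (1/(y²√n)) (Tr((A-B)(A-B)^T))^{1/2}. -/
open Matrix Complex

/-- Stieltjes transform of the empirical spectral distribution of a real
symmetric matrix `A`: `S_A(z) = (1/n) Tr((A - z I)⁻¹)`. -/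
noncomputable def stieltjes {n : ℕ} (A : Matrix (Fin n) (Fin n) ℝ) (z : ℂ) : ℂ :=
  (1 / (n : ℂ)) * (Matrix.trace ((A.map (fun a => (a : ℂ)) - z • (1 : Matrix (Fin n) (Fin n) ℂ))⁻¹))

lemma isHermitian_map_of_isSymm {n : ℕ} (A : Matrix (Fin n) (Fin n) ℝ) (hA : A.IsSymm) :
    (A.map (fun a => (a : ℂ))).IsHermitian := by
  ext i j
  simp [Matrix.conjTranspose_apply, Matrix.map_apply, hA.apply]

lemma exists_resolvent {n : ℕ} (M : Matrix (Fin n) (Fin n) ℂ) (hM : M.IsHermitian)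
    (z : ℂ) (hz : z.im ≠ 0) :
    ∃ (U : Matrix (Fin n) (Fin n) ℂ) (d : Fin n → ℂ),
      U * Uᴴ = 1 ∧ Uᴴ * U = 1 ∧
      (∀ i, ‖d i‖ * |z.im| ≤ 1) ∧
      (M - z • 1) * (U * Matrix.diagonal d * Uᴴ) = 1 ∧
      (U * Matrix.diagonal d * Uᴴ) * (M - z • 1) = 1 := by
  classical
  set U : Matrix (Fin n) (Fin n) ℂ := (hM.eigenvectorUnitary : Matrix (Fin n) (Fin n) ℂ)
  have hU1 : U * Uᴴ = 1 := by
    have := (Matrix.mem_unitaryGroup_iff).mp hM.eigenvectorUnitary.2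
    rwa [Matrix.star_eq_conjTranspose] at this
  have hU2 : Uᴴ * U = 1 := by
    have := (Matrix.mem_unitaryGroup_iff').mp hM.eigenvectorUnitary.2
    rwa [Matrix.star_eq_conjTranspose] at this
  set e : Fin n → ℂ := fun i => (hM.eigenvalues i : ℂ) - z with he
  have he0 : ∀ i, e i ≠ 0 := by
    intro i h
    apply hz
    have : (e i).im = -z.im := by simp [he]
    rw [h] at this
    simpa using this.symm
  set d : Fin n → ℂ := fun i => (e i)⁻¹ with hd
  have key : M - z • 1 = U * Matrix.diagonal e * Uᴴ := by
    have hspec := hM.spectral_theorem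
    rw [Unitary.conjStarAlgAut_apply, Matrix.star_eq_conjTranspose] at hspec
    have h1 : z • (1 : Matrix (Fin n) (Fin n) ℂ) = U * Matrix.diagonal (fun _ => z) * Uᴴ := by
      rw [Matrix.smul_one_eq_diagonal]
      have : (Matrix.diagonal fun _ => z) * Uᴴ = Uᴴ * Matrix.diagonal (fun _ => z) := by
        rw [← Matrix.smul_one_eq_diagonal, Matrix.smul_mul, Matrix.one_mul,
          Matrix.mul_smul, Matrix.mul_one]
      rw [Matrix.mul_assoc, this, ← Matrix.mul_assoc, hU1, Matrix.one_mul]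
    calc M - z • 1 = U * Matrix.diagonal (RCLike.ofReal ∘ hM.eigenvalues) * Uᴴ
          - U * Matrix.diagonal (fun _ => z) * Uᴴ := by
          rw [← h1, ← hspec]
      _ = U * (Matrix.diagonal (RCLike.ofReal ∘ hM.eigenvalues) - Matrix.diagonal (fun _ => z)) * Uᴴ := by
          rw [Matrix.mul_sub, Matrix.sub_mul]
      _ = U * Matrix.diagonal e * Uᴴ := by rw [Matrix.diagonal_sub]; rfl
  have hdiag_one : (fun i => e i * d i) = fun _ => (1:ℂ) := by
    funext i; exact mul_inv_cancel₀ (he0 i)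
  have hdiag_one' : (fun i => d i * e i) = fun _ => (1:ℂ) := by
    funext i; exact inv_mul_cancel₀ (he0 i)
  refine ⟨U, d, hU1, hU2, ?_, ?_, ?_⟩
  · intro i
    have h1 : |z.im| ≤ ‖e i‖ := by
      have : |(e i).im| ≤ ‖e i‖ := Complex.abs_im_le_norm _
      simpa [he] using this
    have h2 : (0:ℝ) < ‖e i‖ := by
      simpa using (norm_pos_iff.mpr (he0 i))
    rw [hd]
    simp only [norm_inv]
    rw [inv_mul_le_iff₀ h2]
    simpa using h1
  · have := key
    calc (M - z • 1) * (U * Matrix.diagonal d * Uᴴ)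
        = U * Matrix.diagonal e * Uᴴ * (U * Matrix.diagonal d * Uᴴ) := by rw [key]
      _ = U * Matrix.diagonal e * (Uᴴ * U) * Matrix.diagonal d * Uᴴ := by
          simp only [Matrix.mul_assoc]
      _ = U * (Matrix.diagonal e * Matrix.diagonal d) * Uᴴ := by
          rw [hU2]; simp only [Matrix.mul_assoc, Matrix.one_mul]
      _ = 1 := by
          rw [Matrix.diagonal_mul_diagonal, hdiag_one, Matrix.diagonal_one, Matrix.mul_one, hU1]
  · calc (U * Matrix.diagonal d * Uᴴ) * (M - z • 1)
        = U * Matrix.diagonal d * (Uᴴ * U) * Matrix.diagonal e * Uᴴ := by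
          rw [key]; simp only [Matrix.mul_assoc]
      _ = U * (Matrix.diagonal d * Matrix.diagonal e) * Uᴴ := by
          rw [hU2]; simp only [Matrix.mul_assoc, Matrix.one_mul]
      _ = 1 := by
          rw [Matrix.diagonal_mul_diagonal, hdiag_one', Matrix.diagonal_one, Matrix.mul_one, hU1]

lemma trace_mul_conjTranspose_eq {n : ℕ} (X : Matrix (Fin n) (Fin n) ℂ) :
    Matrix.trace (X * Xᴴ) = ((∑ p : Fin n × Fin n, (‖X p.1 p.2‖)^2 : ℝ) : ℂ) := by
  rw [Fintype.sum_prod_type]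
  push_cast
  simp [Matrix.trace, Matrix.diag, Matrix.mul_apply, Matrix.conjTranspose_apply,
    Complex.mul_conj, Complex.normSq_eq_norm_sq]

lemma sum_abs_sq_of_unitary {n : ℕ} (W : Matrix (Fin n) (Fin n) ℂ) (h : W * Wᴴ = 1) :
    ∑ p : Fin n × Fin n, (‖W p.1 p.2‖)^2 = n := by
  have h1 : Matrix.trace (W * Wᴴ) = (n : ℂ) := by
    rw [h, Matrix.trace_one]; simp
  rw [trace_mul_conjTranspose_eq] at h1
  exact_mod_cast h1

/-- Lemma 2.1 of Götze et al.: for symmetric real matrices `A, B` and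
`z = x + iy` with `y ≠ 0`,
`|S_A(z) - S_B(z)| ≤ (1/(y²√n)) (Tr((A-B)(A-B)ᵀ))^{1/2}`. -/
theorem stieltjes_diff_le {n : ℕ} (hn : 0 < n)
    (A B : Matrix (Fin n) (Fin n) ℝ) (hA : A.IsSymm) (hB : B.IsSymm)
    (z : ℂ) (hz : z.im ≠ 0) :
    ‖stieltjes A z - stieltjes B z‖ ≤
      (1 / (z.im ^ 2 * Real.sqrt n)) * Real.sqrt (Matrix.trace ((A - B) * (A - B)ᵀ)) := by
  classical
  set MA := A.map (fun a => (a : ℂ)) with hMA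
  set MB := B.map (fun a => (a : ℂ)) with hMB
  obtain ⟨UA, dA, hUA1, hUA2, hdA, hA5, hA6⟩ :=
    exists_resolvent MA (isHermitian_map_of_isSymm A hA) z hz
  obtain ⟨UB, dB, hUB1, hUB2, hdB, hB5, hB6⟩ :=
    exists_resolvent MB (isHermitian_map_of_isSymm B hB) z hz
  set RA := UA * Matrix.diagonal dA * UAᴴ with hRA
  set RB := UB * Matrix.diagonal dB * UBᴴ with hRB
  have hinvA : (MA - z • 1)⁻¹ = RA := Matrix.inv_eq_right_inv hA5
  have hinvB : (MB - z • 1)⁻¹ = RB := Matrix.inv_eq_right_inv hB5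
  set D := MB - MA with hD
  -- resolvent identity
  have hres : RA - RB = RA * D * RB := by
    have h1 : RA * ((MB - z • 1) * RB) = RA := by rw [hB5, Matrix.mul_one]
    have h2 : (RA * (MA - z • 1)) * RB = RB := by rw [hA6, Matrix.one_mul]
    calc RA - RB = RA * ((MB - z • 1) * RB) - (RA * (MA - z • 1)) * RB := by rw [h1, h2]
      _ = RA * ((MB - z • 1) - (MA - z • 1)) * RB := by
          simp only [Matrix.mul_sub, Matrix.sub_mul, Matrix.mul_assoc]
      _ = RA * D * RB := by rw [sub_sub_sub_cancel_right]
  -- trace reduction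
  set Q := UBᴴ * UA with hQ
  set P := UAᴴ * (D * UB) with hP
  have htr : Matrix.trace (RA * D * RB) =
      ∑ i, ∑ j, Q i j * dA j * (P j i * dB i) := by
    have hre : RA * D * RB =
        (UA * (Matrix.diagonal dA * (P * Matrix.diagonal dB))) * UBᴴ := by
      simp only [hRA, hRB, hP, Matrix.mul_assoc]
    rw [hre, Matrix.trace_mul_comm]
    have : UBᴴ * (UA * (Matrix.diagonal dA * (P * Matrix.diagonal dB))) =
        (Q * Matrix.diagonal dA) * (P * Matrix.diagonal dB) := by
      simp only [hQ, Matrix.mul_assoc]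
    rw [this]
    have h2 : Matrix.trace ((Q * Matrix.diagonal dA) * (P * Matrix.diagonal dB))
        = ∑ i, ∑ j, (Q * Matrix.diagonal dA) i j * (P * Matrix.diagonal dB) j i := by
      simp [Matrix.trace, Matrix.diag, Matrix.mul_apply]
    rw [h2]
    refine Finset.sum_congr rfl fun i _ => Finset.sum_congr rfl fun j _ => ?_
    rw [Matrix.mul_diagonal, Matrix.mul_diagonal]
  -- bounds
  have hy : (0:ℝ) < |z.im| := abs_pos.mpr hz
  have hdA' : ∀ i, ‖dA i‖ ≤ |z.im|⁻¹ := fun i => by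
    have h := (le_div_iff₀ hy).mpr (hdA i)
    rwa [one_div] at h
  have hdB' : ∀ i, ‖dB i‖ ≤ |z.im|⁻¹ := fun i => by
    have h := (le_div_iff₀ hy).mpr (hdB i)
    rwa [one_div] at h
  set t := Matrix.trace ((A - B) * (A - B)ᵀ) with ht
  -- Frobenius norm of P
  have hPfrob : ∑ p : Fin n × Fin n, (‖P p.1 p.2‖)^2 = t := by
    have h1 : Matrix.trace (P * Pᴴ) = Matrix.trace (D * Dᴴ) := by
      have hPH : Pᴴ = UBᴴ * (Dᴴ * UA) := by
        simp only [hP, Matrix.conjTranspose_mul, Matrix.conjTranspose_conjTranspose,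
          Matrix.mul_assoc]
      calc Matrix.trace (P * Pᴴ)
          = Matrix.trace (UAᴴ * (D * (UB * UBᴴ) * (Dᴴ * UA))) := by
            rw [hP, hPH]; simp only [Matrix.mul_assoc]
        _ = Matrix.trace (UAᴴ * (D * (Dᴴ * UA))) := by rw [hUB1]; simp [Matrix.mul_assoc]
        _ = Matrix.trace (D * Dᴴ * (UA * UAᴴ)) := by
            rw [Matrix.trace_mul_comm]; simp only [Matrix.mul_assoc]
        _ = Matrix.trace (D * Dᴴ) := by rw [hUA1, Matrix.mul_one]
    have h2 : Matrix.trace (D * Dᴴ) = (t : ℂ) := by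
      have hDH : Dᴴ = ((B - A)ᵀ).map (fun a => (a : ℂ)) := by
        ext i j
        simp [hD, hMA, hMB, Matrix.conjTranspose_apply, Matrix.map_apply]
      have hDm : D = (B - A).map (fun a => (a : ℂ)) := by
        ext i j; simp [hD, hMA, hMB, Matrix.map_apply]
      have hmul : D * Dᴴ = ((B - A) * (B - A)ᵀ).map (fun a => (a : ℂ)) := by
        rw [hDH, hDm]
        ext i j
        simp [Matrix.mul_apply, Matrix.map_apply]
      rw [hmul]
      have : Matrix.trace (((B - A) * (B - A)ᵀ).map (fun a => (a : ℂ)))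
          = ((Matrix.trace ((B - A) * (B - A)ᵀ) : ℝ) : ℂ) := by
        simp [Matrix.trace, Matrix.diag, Matrix.map_apply]
      rw [this]
      congr 1
      have : (B - A) * (B - A)ᵀ = (A - B) * (A - B)ᵀ := by
        rw [show B - A = -(A - B) from (neg_sub A B).symm, Matrix.transpose_neg,
          Matrix.neg_mul, Matrix.mul_neg, neg_neg]
      rw [ht, this]
    rw [trace_mul_conjTranspose_eq] at h1
    rw [h2] at h1
    exact_mod_cast h1
  have hQfrob : ∑ p : Fin n × Fin n, (‖Q p.1 p.2‖)^2 = n := by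
    apply sum_abs_sq_of_unitary
    have hQH : Qᴴ = UAᴴ * UB := by simp [hQ, Matrix.conjTranspose_mul]
    calc Q * Qᴴ = UBᴴ * (UA * UAᴴ) * UB := by rw [hQ, hQH]; simp only [Matrix.mul_assoc]
      _ = 1 := by rw [hUA1]; simpa using hUB2
  -- the sum bound
  have habs : ‖Matrix.trace (RA * D * RB)‖ ≤
      (∑ p : Fin n × Fin n, ‖Q p.1 p.2‖ * ‖P p.2 p.1‖) * (z.im ^ 2)⁻¹ := by
    rw [htr]
    calc ‖∑ i, ∑ j, Q i j * dA j * (P j i * dB i)‖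
        ≤ ∑ i, ∑ j, ‖Q i j * dA j * (P j i * dB i)‖ := by
          refine (norm_sum_le _ _).trans ?_
          exact Finset.sum_le_sum fun i _ => norm_sum_le _ _
      _ ≤ ∑ i, ∑ j, ‖Q i j‖ * ‖P j i‖ * (|z.im|⁻¹ * |z.im|⁻¹) := by
          refine Finset.sum_le_sum fun i _ => Finset.sum_le_sum fun j _ => ?_
          simp only [norm_mul]
          calc ‖Q i j‖ * ‖dA j‖ * (‖P j i‖ * ‖dB i‖)
              = ‖Q i j‖ * ‖P j i‖ * (‖dA j‖ * ‖dB i‖) := by ring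
            _ ≤ ‖Q i j‖ * ‖P j i‖ * (|z.im|⁻¹ * |z.im|⁻¹) := by
                refine mul_le_mul_of_nonneg_left ?_ (by positivity)
                exact mul_le_mul (hdA' j) (hdB' i) (by positivity) (by positivity)
      _ = (∑ p : Fin n × Fin n, ‖Q p.1 p.2‖ * ‖P p.2 p.1‖) * (z.im ^ 2)⁻¹ := by
          have hc : |z.im|⁻¹ * |z.im|⁻¹ = (z.im ^ 2)⁻¹ := by
            rw [← mul_inv, ← sq, _root_.sq_abs]
          rw [Fintype.sum_prod_type]
          simp_rw [hc, ← Finset.sum_mul]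
  -- Cauchy-Schwarz
  have hCS : (∑ p : Fin n × Fin n, ‖Q p.1 p.2‖ * ‖P p.2 p.1‖) ≤
      Real.sqrt n * Real.sqrt t := by
    have := Real.sum_mul_le_sqrt_mul_sqrt (Finset.univ : Finset (Fin n × Fin n))
      (fun p => ‖Q p.1 p.2‖) (fun p => ‖P p.2 p.1‖)
    rw [hQfrob] at this
    have hswap : ∑ p : Fin n × Fin n, (‖P p.2 p.1‖)^2
        = ∑ p : Fin n × Fin n, (‖P p.1 p.2‖)^2 := by
      rw [Fintype.sum_prod_type, Fintype.sum_prod_type]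
      exact Finset.sum_comm
    rw [hswap, hPfrob] at this
    exact this
  -- assemble
  have hdiff : stieltjes A z - stieltjes B z = (1 / (n : ℂ)) * Matrix.trace (RA * D * RB) := by
    rw [stieltjes, stieltjes, hinvA, hinvB, ← hres, Matrix.trace_sub]
    ring
  rw [hdiff, norm_mul]
  have hn' : (0:ℝ) < Real.sqrt n := Real.sqrt_pos.mpr (by exact_mod_cast hn)
  have habs1 : ‖1 / (n:ℂ)‖ = 1 / (n:ℝ) := by
    rw [norm_div]; simp
  rw [habs1]
  have hfinal : ‖Matrix.trace (RA * D * RB)‖ ≤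
      Real.sqrt n * Real.sqrt t * (z.im ^ 2)⁻¹ :=
    habs.trans (mul_le_mul_of_nonneg_right hCS (by positivity))
  calc (1 / (n:ℝ)) * ‖Matrix.trace (RA * D * RB)‖
      ≤ (1 / (n:ℝ)) * (Real.sqrt n * Real.sqrt t * (z.im ^ 2)⁻¹) := by
        refine mul_le_mul_of_nonneg_left hfinal (by positivity)
    _ = (1 / (z.im ^ 2 * Real.sqrt n)) * Real.sqrt t := by
        have hy2 : z.im ^ 2 ≠ 0 := pow_ne_zero _ hz
        have key : (1 / (n:ℝ)) = 1 / (Real.sqrt n * Real.sqrt n) := by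
          rw [Real.mul_self_sqrt (by positivity)]
        rw [key]
        have hs0 : Real.sqrt (n:ℝ) ≠ 0 := ne_of_gt hn'
        field_simp
end

section
/- Let A and B be two N×p real matrices, and let F_{AA^T} and F_{BB^T} denote the empirical spectral distribution functions of AA^T and BB^T (N×N symmetric matrices). Then the Lévy distance d satisfies d²(F_{AA^T}, F_{BB^T}) ≤ (√2 / N) [Tr(AA^T + BB^T) · Tr((A-B)(A-B)^T)]^{1/2}. -/
open Matrix
open scoped Classical

/-- Empirical spectral distribution function of a Hermitian real matrix. -/
noncomputable def ESD {N : ℕ} {M : Matrix (Fin N) (Fin N) ℝ}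
    (hM : M.IsHermitian) : ℝ → ℝ :=
  fun x => (1 / (N : ℝ)) * (Finset.univ.filter (fun k => hM.eigenvalues k ≤ x)).card

/-- The Lévy distance between two distribution functions. -/
noncomputable def levyDist (F G : ℝ → ℝ) : ℝ :=
  sInf {ε : ℝ | 0 < ε ∧ ∀ x, F (x - ε) - ε ≤ G x ∧ G x ≤ F (x + ε) + ε}

/-! If `#{λ(AAᵀ) ≤ x - ε}` exceeded `#{λ(BBᵀ) ≤ x} + εN`, the span of the eigenvectors of `AAᵀ`
with eigenvalues `≤ x - ε` would meet the span of those of `BBᵀ` with eigenvalues `> x` in a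
subspace of dimension `d > εN`. For an orthonormal basis `w` of it, the quadratic forms of the two
Gram matrices differ by at least `ε` on each `wᵢ`, so
`Nε² < dε ≤ ∑ (‖Bᵀwᵢ‖² - ‖Aᵀwᵢ‖²) ≤ ∑ ‖(A+B)ᵀwᵢ‖ ‖(A-B)ᵀwᵢ‖`,
and Cauchy–Schwarz together with Bessel's inequality `∑ ‖Cᵀwᵢ‖² ≤ tr(CCᵀ)` bounds the right side by
`√2 √(tr(AAᵀ + BBᵀ) tr((A-B)(A-B)ᵀ))`. Hence every `ε` with `ε² > (√2/N) √(⋯)` is admissible in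
the definition of the Lévy distance. -/

open Module Finset
open scoped RealInnerProductSpace

namespace OrthonormalBasis

variable {ι E : Type*} [Fintype ι] [NormedAddCommGroup E] [InnerProductSpace ℝ E]
  (b : OrthonormalBasis ι ℝ E)

theorem inner_eq_zero_of_mem_span_image {s : Set ι} {i : ι} (hi : i ∉ s) {v : E}
    (hv : v ∈ Submodule.span ℝ (b '' s)) : ⟪b i, v⟫ = 0 := by
  induction hv using Submodule.span_induction with
  | mem x hx =>
    obtain ⟨j, hj, rfl⟩ := hx
    exact b.orthonormal.2 (ne_of_mem_of_not_mem hj hi).symm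
  | zero => exact inner_zero_right _
  | add x y _ _ hx hy => rw [inner_add_right, hx, hy, add_zero]
  | smul a x _ hx => rw [real_inner_smul_right, hx, mul_zero]

theorem finrank_span_image (s : Finset ι) :
    finrank ℝ (Submodule.span ℝ (b '' s)) = #s := by
  have hli : LinearIndependent ℝ (b ∘ ((↑) : s → ι)) :=
    b.orthonormal.linearIndependent.comp _ Subtype.val_injective
  rw [← Fintype.card_coe s, ← finrank_span_eq_card hli, Set.range_comp, Subtype.range_coe_subtype,
    Finset.setOfPred_mem]

variable {T : E →ₗ[ℝ] E} {μ : ι → ℝ}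

theorem inner_apply_self_eq_sum (hT : T.IsSymmetric) (hb : ∀ i, T (b i) = μ i • b i) (v : E) :
    ⟪v, T v⟫ = ∑ i, μ i * ⟪b i, v⟫ ^ 2 := by
  rw [← b.sum_inner_mul_inner]
  refine sum_congr rfl fun i _ => ?_
  rw [← hT, hb, real_inner_smul_left, real_inner_comm]
  ring

theorem inner_apply_self_le_of_mem_span (hT : T.IsSymmetric) (hb : ∀ i, T (b i) = μ i • b i)
    {s : Set ι} {c : ℝ} (hμ : ∀ i ∈ s, μ i ≤ c) {v : E} (hv : v ∈ Submodule.span ℝ (b '' s)) :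
    ⟪v, T v⟫ ≤ c * ‖v‖ ^ 2 := by
  rw [b.inner_apply_self_eq_sum hT hb, ← b.sum_sq_inner_right, mul_sum]
  refine sum_le_sum fun i _ => ?_
  by_cases hi : i ∈ s
  · exact mul_le_mul_of_nonneg_right (hμ i hi) (sq_nonneg _)
  · simp [b.inner_eq_zero_of_mem_span_image hi hv]

theorem le_inner_apply_self_of_mem_span (hT : T.IsSymmetric) (hb : ∀ i, T (b i) = μ i • b i)
    {s : Set ι} {c : ℝ} (hμ : ∀ i ∈ s, c ≤ μ i) {v : E} (hv : v ∈ Submodule.span ℝ (b '' s)) :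
    c * ‖v‖ ^ 2 ≤ ⟪v, T v⟫ := by
  have hneg : (-T).IsSymmetric := fun x y => by
    simp only [LinearMap.neg_apply, inner_neg_left, inner_neg_right, hT x y]
  have := b.inner_apply_self_le_of_mem_span (μ := -μ) (c := -c) hneg (fun i => by simp [hb])
    (fun i hi => neg_le_neg (hμ i hi)) hv
  simpa [inner_neg_right] using this

end OrthonormalBasis

theorem Submodule.exists_orthonormal_inf {E : Type*} [NormedAddCommGroup E]
    [InnerProductSpace ℝ E] [FiniteDimensional ℝ E] (U W : Submodule ℝ E) :
    ∃ (d : ℕ) (w : Fin d → E), Orthonormal ℝ w ∧ (∀ i, w i ∈ U ∧ w i ∈ W) ∧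
      finrank ℝ U + finrank ℝ W ≤ finrank ℝ E + d := by
  refine ⟨_, fun i => (stdOrthonormalBasis ℝ ↥(U ⊓ W) i : E),
    (stdOrthonormalBasis ℝ _).orthonormal.comp_linearIsometry (U ⊓ W).subtypeₗᵢ,
    fun i => Submodule.mem_inf.1 (stdOrthonormalBasis ℝ ↥(U ⊓ W) i).2, ?_⟩
  rw [← Submodule.finrank_sup_add_finrank_inf_eq]
  exact Nat.add_le_add_right (Submodule.finrank_le _) _

theorem exists_orthonormal_inner_apply_self_le_and_le {ι E : Type*} [Fintype ι]
    [NormedAddCommGroup E] [InnerProductSpace ℝ E] {T₁ T₂ : E →ₗ[ℝ] E}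
    (hT₁ : T₁.IsSymmetric) (hT₂ : T₂.IsSymmetric) (b₁ b₂ : OrthonormalBasis ι ℝ E)
    {μ₁ μ₂ : ι → ℝ} (hb₁ : ∀ i, T₁ (b₁ i) = μ₁ i • b₁ i) (hb₂ : ∀ i, T₂ (b₂ i) = μ₂ i • b₂ i)
    (a c : ℝ) :
    ∃ (d : ℕ) (w : Fin d → E), Orthonormal ℝ w ∧ #{i | μ₁ i ≤ a} ≤ #{i | μ₂ i ≤ c} + d ∧
      ∀ j, ⟪w j, T₁ (w j)⟫ ≤ a ∧ c ≤ ⟪w j, T₂ (w j)⟫ := by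
  have : FiniteDimensional ℝ E := Module.Finite.of_basis b₁.toBasis
  obtain ⟨d, w, hw, hmem, hdim⟩ := Submodule.exists_orthonormal_inf
    (Submodule.span ℝ (b₁ '' ↑({i | μ₁ i ≤ a} : Finset ι)))
    (Submodule.span ℝ (b₂ '' ↑({i | ¬μ₂ i ≤ c} : Finset ι)))
  have hcard := card_filter_add_card_filter_not (s := univ) (fun i => μ₂ i ≤ c)
  rw [b₁.finrank_span_image, b₂.finrank_span_image, finrank_eq_card_basis b₁.toBasis] at hdim
  refine ⟨d, w, hw, by rw [card_univ] at hcard; omega, fun j => ⟨?_, ?_⟩⟩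
  · simpa [hw.1 j] using b₁.inner_apply_self_le_of_mem_span hT₁ hb₁
      (fun i hi => (mem_filter.1 hi).2) (hmem j).1
  · simpa [hw.1 j] using b₂.le_inner_apply_self_of_mem_span hT₂ hb₂
      (fun i hi => (not_le.1 (mem_filter.1 hi).2).le) (hmem j).2

theorem Orthonormal.sum_norm_apply_sq_le_sum_norm_adjoint_sq {ι κ E F : Type*}
    [Fintype ι] [Fintype κ]
    [NormedAddCommGroup E] [InnerProductSpace ℝ E] [FiniteDimensional ℝ E]
    [NormedAddCommGroup F] [InnerProductSpace ℝ F] [FiniteDimensional ℝ F]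
    {w : ι → E} (hw : Orthonormal ℝ w) (L : E →ₗ[ℝ] F) (b : OrthonormalBasis κ ℝ F) :
    ∑ i, ‖L (w i)‖ ^ 2 ≤ ∑ j, ‖L.adjoint (b j)‖ ^ 2 := by
  calc ∑ i, ‖L (w i)‖ ^ 2 = ∑ j, ∑ i, ‖⟪w i, L.adjoint (b j)⟫‖ ^ 2 := by
        simp_rw [← b.sum_sq_inner_right, LinearMap.adjoint_inner_right, real_inner_comm,
          Real.norm_eq_abs, sq_abs]
        exact sum_comm
    _ ≤ ∑ j, ‖L.adjoint (b j)‖ ^ 2 := sum_le_sum fun j _ => hw.sum_inner_products_le _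

theorem norm_sq_sub_norm_sq_le {F : Type*} [NormedAddCommGroup F] [InnerProductSpace ℝ F]
    (x y : F) : ‖x‖ ^ 2 - ‖y‖ ^ 2 ≤ ‖x + y‖ * ‖x - y‖ :=
  calc ‖x‖ ^ 2 - ‖y‖ ^ 2 = ⟪x + y, x - y⟫ := by
        rw [inner_add_left, inner_sub_right, inner_sub_right, real_inner_self_eq_norm_sq,
          real_inner_self_eq_norm_sq, real_inner_comm x y]
        ring
    _ ≤ ‖x + y‖ * ‖x - y‖ := real_inner_le_norm _ _

namespace Matrix

variable {m n : Type*} [Fintype m] [Fintype n]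

theorem inner_toEuclideanLin_mul_transpose_self [DecidableEq m] (C : Matrix m n ℝ)
    (v : EuclideanSpace ℝ m) :
    ⟪v, toEuclideanLin (C * Cᵀ) v⟫ = ‖toEuclideanLin Cᵀ v‖ ^ 2 := by
  have hadj : toEuclideanLin C = (toEuclideanLin Cᵀ).adjoint := by
    simpa using toEuclideanLin_conjTranspose_eq_adjoint Cᵀ
  rw [toLpLin_mul_same, LinearMap.comp_apply, hadj, LinearMap.adjoint_inner_right,
    real_inner_self_eq_norm_sq]

theorem trace_mul_transpose_eq_sum_norm_sq [DecidableEq n] (C : Matrix m n ℝ) :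
    trace (C * Cᵀ) = ∑ j, ‖toEuclideanLin C (EuclideanSpace.basisFun n ℝ j)‖ ^ 2 := by
  simp_rw [EuclideanSpace.norm_sq_eq]
  simp only [trace, diag_apply, mul_apply, transpose_apply, EuclideanSpace.basisFun_apply,
    ofLp_toLpLin, PiLp.ofLp_single, toLin'_apply, mulVec_single, MulOpposite.op_one,
    Pi.smul_apply, col_apply, one_smul, Real.norm_eq_abs, sq, abs_mul_abs_self]
  exact sum_comm

theorem trace_mul_transpose_nonneg (C : Matrix m n ℝ) : 0 ≤ trace (C * Cᵀ) := by
  rw [trace_mul_transpose_eq_sum_norm_sq]; positivity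

theorem sum_norm_toEuclideanLin_transpose_sq_le_trace [DecidableEq m] {ι : Type*} [Fintype ι]
    {w : ι → EuclideanSpace ℝ m} (hw : Orthonormal ℝ w) (C : Matrix m n ℝ) :
    ∑ i, ‖toEuclideanLin Cᵀ (w i)‖ ^ 2 ≤ trace (C * Cᵀ) := by
  have hadj : (toEuclideanLin Cᵀ).adjoint = toEuclideanLin C := by
    simpa using (toEuclideanLin_conjTranspose_eq_adjoint Cᵀ).symm
  simpa [hadj, trace_mul_transpose_eq_sum_norm_sq] using
    hw.sum_norm_apply_sq_le_sum_norm_adjoint_sq (toEuclideanLin Cᵀ)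
      (EuclideanSpace.basisFun n ℝ)

theorem trace_add_mul_transpose_add_le (A B : Matrix m n ℝ) :
    trace ((A + B) * (A + B)ᵀ) ≤ 2 * trace (A * Aᵀ + B * Bᵀ) := by
  have hpar : trace ((A + B) * (A + B)ᵀ) + trace ((A - B) * (A - B)ᵀ) =
      2 * trace (A * Aᵀ + B * Bᵀ) := by
    simp only [transpose_add, transpose_sub, Matrix.add_mul, Matrix.mul_add, Matrix.sub_mul,
      Matrix.mul_sub, trace_add, trace_sub]
    ring
  linarith [trace_mul_transpose_nonneg (A - B)]

theorem IsHermitian.toEuclideanLin_eigenvectorBasis [DecidableEq m] {M : Matrix m m ℝ}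
    (hM : M.IsHermitian) (i : m) :
    toEuclideanLin M (hM.eigenvectorBasis i) = hM.eigenvalues i • hM.eigenvectorBasis i :=
  WithLp.ofLp_injective 2 (hM.mulVec_eigenvectorBasis i)

theorem sum_inner_toEuclideanLin_gram_sub_le [DecidableEq m] {ι : Type*} [Fintype ι]
    {w : ι → EuclideanSpace ℝ m} (hw : Orthonormal ℝ w) (A B : Matrix m n ℝ) :
    ∑ i, (⟪w i, toEuclideanLin (B * Bᵀ) (w i)⟫ - ⟪w i, toEuclideanLin (A * Aᵀ) (w i)⟫) ≤
      √2 * √(trace (A * Aᵀ + B * Bᵀ) * trace ((A - B) * (A - B)ᵀ)) := by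
  have hT : 0 ≤ trace (A * Aᵀ + B * Bᵀ) := by
    rw [trace_add]; exact add_nonneg (trace_mul_transpose_nonneg A) (trace_mul_transpose_nonneg B)
  calc ∑ i, (⟪w i, toEuclideanLin (B * Bᵀ) (w i)⟫ - ⟪w i, toEuclideanLin (A * Aᵀ) (w i)⟫)
      ≤ ∑ i, ‖toEuclideanLin (A + B)ᵀ (w i)‖ * ‖toEuclideanLin (A - B)ᵀ (w i)‖ := by
        refine sum_le_sum fun i _ => ?_
        rw [inner_toEuclideanLin_mul_transpose_self, inner_toEuclideanLin_mul_transpose_self,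
          transpose_add, transpose_sub, map_add, map_sub, LinearMap.add_apply, LinearMap.sub_apply,
          add_comm, norm_sub_rev]
        exact norm_sq_sub_norm_sq_le _ _
    _ ≤ √(∑ i, ‖toEuclideanLin (A + B)ᵀ (w i)‖ ^ 2) *
          √(∑ i, ‖toEuclideanLin (A - B)ᵀ (w i)‖ ^ 2) :=
        Real.sum_mul_le_sqrt_mul_sqrt _ _ _
    _ ≤ √(2 * trace (A * Aᵀ + B * Bᵀ)) * √(trace ((A - B) * (A - B)ᵀ)) := by
        gcongr
        · exact (sum_norm_toEuclideanLin_transpose_sq_le_trace hw _).trans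
            (trace_add_mul_transpose_add_le A B)
        · exact sum_norm_toEuclideanLin_transpose_sq_le_trace hw _
    _ = √2 * √(trace (A * Aᵀ + B * Bᵀ) * trace ((A - B) * (A - B)ᵀ)) := by
        rw [Real.sqrt_mul zero_le_two, Real.sqrt_mul hT, mul_assoc]

theorem trace_sub_mul_transpose_sub_comm (A B : Matrix m n ℝ) :
    trace ((A - B) * (A - B)ᵀ) = trace ((B - A) * (B - A)ᵀ) := by
  rw [← neg_sub B A, transpose_neg, Matrix.neg_mul, Matrix.mul_neg, neg_neg]

theorem card_eigenvalues_le_sub_le_card_add [DecidableEq m] {A B : Matrix m n ℝ}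
    (hA : (A * Aᵀ).IsHermitian) (hB : (B * Bᵀ).IsHermitian) {ε : ℝ} (hε : 0 < ε)
    (hbound : √2 * √(trace (A * Aᵀ + B * Bᵀ) * trace ((A - B) * (A - B)ᵀ)) ≤
      Fintype.card m * ε ^ 2) (x : ℝ) :
    (#{k | hA.eigenvalues k ≤ x - ε} : ℝ) ≤
      #{k | hB.eigenvalues k ≤ x} + ε * Fintype.card m := by
  by_contra! hlt
  obtain ⟨d, w, hw, hcard, hgap⟩ := exists_orthonormal_inner_apply_self_le_and_le
    (isSymmetric_toEuclideanLin_iff.mpr hA) (isSymmetric_toEuclideanLin_iff.mpr hB)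
    hA.eigenvectorBasis hB.eigenvectorBasis hA.toEuclideanLin_eigenvectorBasis
    hB.toEuclideanLin_eigenvectorBasis (x - ε) x
  have hd : ε * Fintype.card m < d := by
    have : (#{k | hA.eigenvalues k ≤ x - ε} : ℝ) ≤ #{k | hB.eigenvalues k ≤ x} + d := by
      exact_mod_cast hcard
    linarith
  have hsum : d * ε ≤ ∑ j,
      (⟪w j, toEuclideanLin (B * Bᵀ) (w j)⟫ - ⟪w j, toEuclideanLin (A * Aᵀ) (w j)⟫) :=
    calc (d : ℝ) * ε = ∑ _j : Fin d, ε := by simp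
      _ ≤ _ := sum_le_sum fun j _ => by linarith [hgap j]
  nlinarith [sum_inner_toEuclideanLin_gram_sub_le hw A B, mul_lt_mul_of_pos_right hd hε]

end Matrix

theorem esd_sub_sub_le {N p : ℕ} (hN : 0 < N) {A B : Matrix (Fin N) (Fin p) ℝ}
    (hA : (A * Aᵀ).IsHermitian) (hB : (B * Bᵀ).IsHermitian) {ε : ℝ} (hε : 0 < ε)
    (hbound : √2 / N * √(trace (A * Aᵀ + B * Bᵀ) * trace ((A - B) * (A - B)ᵀ)) ≤ ε ^ 2)
    (x : ℝ) :
    ESD hA (x - ε) - ε ≤ ESD hB x := by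
  have hN' : (0 : ℝ) < N := Nat.cast_pos.2 hN
  have hcount := card_eigenvalues_le_sub_le_card_add hA hB hε (by
    rw [Fintype.card_fin]; rw [div_mul_eq_mul_div, div_le_iff₀ hN'] at hbound; linarith) x
  rw [Fintype.card_fin] at hcount
  unfold ESD
  field_simp
  linarith

theorem levyDist_nonneg (F G : ℝ → ℝ) : 0 ≤ levyDist F G :=
  Real.sInf_nonneg fun _ hε => hε.1.le

theorem levyDist_le {F G : ℝ → ℝ} {r : ℝ} (hr : 0 ≤ r)
    (h : ∀ ε, r < ε → ∀ x, F (x - ε) - ε ≤ G x ∧ G x ≤ F (x + ε) + ε) : levyDist F G ≤ r :=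
  le_of_forall_gt_imp_ge_of_dense fun ε hε =>
    csInf_le ⟨0, fun _ hδ => hδ.1.le⟩ ⟨hr.trans_lt hε, h ε hε⟩

theorem levyDist_sq_le {F G : ℝ → ℝ} {r : ℝ} (hr : 0 ≤ r)
    (h : ∀ ε, 0 < ε → r < ε ^ 2 → ∀ x, F (x - ε) - ε ≤ G x ∧ G x ≤ F (x + ε) + ε) :
    levyDist F G ^ 2 ≤ r := by
  have hle : levyDist F G ≤ √r := levyDist_le (Real.sqrt_nonneg r) fun ε hε =>
    have hε₀ := (Real.sqrt_nonneg r).trans_lt hε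
    h ε hε₀ ((Real.sqrt_lt' hε₀).1 hε)
  calc levyDist F G ^ 2 ≤ √r ^ 2 := pow_le_pow_left₀ (levyDist_nonneg F G) hle 2
    _ = r := Real.sq_sqrt hr

/-- Corollary A.42 in Bai–Silverstein: for `N × p` real matrices `A`, `B`,
`d²(F_{AAᵀ}, F_{BBᵀ}) ≤ (√2/N) [Tr(AAᵀ + BBᵀ) · Tr((A-B)(A-B)ᵀ)]^{1/2}`. -/
theorem levy_dist_gram_bound {N p : ℕ} (hN : 0 < N)
    (A B : Matrix (Fin N) (Fin p) ℝ)
    (hA : (A * Aᵀ).IsHermitian) (hB : (B * Bᵀ).IsHermitian) :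
    (levyDist (ESD hA) (ESD hB)) ^ 2 ≤
      (Real.sqrt 2 / N) *
        Real.sqrt (Matrix.trace (A * Aᵀ + B * Bᵀ) *
          Matrix.trace ((A - B) * (A - B)ᵀ)) := by
  refine levyDist_sq_le (by positivity) fun ε hε hr x =>
    ⟨esd_sub_sub_le hN hA hB hε hr.le x, ?_⟩
  have hr' : √2 / N * √(trace (B * Bᵀ + A * Aᵀ) * trace ((B - A) * (B - A)ᵀ)) ≤ ε ^ 2 := by
    rw [add_comm, ← trace_sub_mul_transpose_sub_comm]
    exact hr.le
  simpa using esd_sub_sub_le hN hB hA hε hr' (x + ε)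
end

section
/- Let H be a probability distribution on [0,∞), c ∈ (0,∞), and z ∈ ℂ⁺. Suppose S : ℂ⁺ → ℂ⁺ is a Stieltjes transform satisfying S = ∫ 1/(x(1 - c - czS) - z) dH(x), and set S̲ = -(1-c)/z + cS. Then S̲ satisfies z = -1/S̲ + c ∫ x/(1 + x S̲) dH(x). -/
/-!
With `S̲ = -(1 - c)/z + c S` one has `1 - c - c z S = -z S̲`, so the integrand of the equation
for `S` is `-z⁻¹ (1 + x S̲)⁻¹`. Writing `(1 + x S̲)⁻¹ = 1 - S̲ · x/(1 + x S̲)` and integrating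
against the probability measure `H` gives `z S = S̲ t - 1` with `t = ∫ x/(1 + x S̲) dH`;
eliminating `S` leaves `z S̲ = -1 + c S̲ t`. Since `Im S̲ ≠ 0`, the bound
`|1 + x S̲| ≥ |x| |Im S̲|` makes `x/(1 + x S̲)` bounded on all of `ℝ`, hence integrable.
-/

open MeasureTheory

namespace Complex

variable {w : ℂ}

theorem abs_mul_abs_im_le_norm_one_add_ofReal_mul (x : ℝ) : |x| * |w.im| ≤ ‖1 + x * w‖ := by
  calc |x| * |w.im| = |(1 + x * w).im| := by simp [abs_mul]
    _ ≤ ‖1 + x * w‖ := abs_im_le_norm _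

theorem one_add_ofReal_mul_ne_zero (hw : w.im ≠ 0) (x : ℝ) : 1 + x * w ≠ 0 := by
  intro h
  rcases eq_or_ne x 0 with rfl | hx
  · simp at h
  · have := abs_mul_abs_im_le_norm_one_add_ofReal_mul (w := w) x
    rw [h, norm_zero] at this
    have : 0 < |x| * |w.im| := by positivity
    linarith

theorem norm_ofReal_div_one_add_ofReal_mul_le (hw : w.im ≠ 0) (x : ℝ) :
    ‖(x : ℂ) / (1 + x * w)‖ ≤ |w.im|⁻¹ := by
  have hden : 0 < ‖1 + x * w‖ := norm_pos_iff.2 (one_add_ofReal_mul_ne_zero hw x)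
  rw [norm_div, norm_real, Real.norm_eq_abs, div_le_iff₀ hden,
    inv_mul_eq_div, le_div_iff₀ (abs_pos.2 hw)]
  exact abs_mul_abs_im_le_norm_one_add_ofReal_mul x

theorem continuous_ofReal_div_one_add_ofReal_mul (hw : w.im ≠ 0) :
    Continuous fun x : ℝ => (x : ℂ) / (1 + x * w) :=
  continuous_ofReal.div (continuous_const.add (continuous_ofReal.mul continuous_const))
    (one_add_ofReal_mul_ne_zero hw)

theorem integrable_ofReal_div_one_add_ofReal_mul (μ : Measure ℝ) [IsFiniteMeasure μ]
    (hw : w.im ≠ 0) : Integrable (fun x : ℝ => (x : ℂ) / (1 + x * w)) μ :=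
  (integrable_const |w.im|⁻¹).mono'
    (continuous_ofReal_div_one_add_ofReal_mul hw).aestronglyMeasurable
    (.of_forall (norm_ofReal_div_one_add_ofReal_mul_le hw))

theorem integral_one_div_one_add_ofReal_mul (μ : Measure ℝ) [IsProbabilityMeasure μ]
    (hw : w.im ≠ 0) :
    ∫ x : ℝ, 1 / (1 + (x : ℂ) * w) ∂μ =
      1 - w * ∫ x : ℝ, (x : ℂ) / (1 + x * w) ∂μ := by
  have hsplit : ∀ x : ℝ, 1 / (1 + (x : ℂ) * w) = 1 - w * ((x : ℂ) / (1 + x * w)) := by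
    intro x
    have := one_add_ofReal_mul_ne_zero hw x
    field_simp
    ring
  simp_rw [hsplit]
  rw [integral_sub (integrable_const 1)
    ((integrable_ofReal_div_one_add_ofReal_mul μ hw).const_mul w), integral_const_mul]
  simp

end Complex

theorem mp_equation_reformulation_general
    (H : Measure ℝ) [IsProbabilityMeasure H]
    (c : ℝ)
    (z S Sb : ℂ) (hz : 0 < z.im)
    (hSb : Sb = -(1 - (c : ℂ)) / z + c * S) (hSbim : 0 < Sb.im)
    (heq : S = ∫ x : ℝ, 1 / ((x : ℂ) * (1 - c - c * z * S) - z) ∂H) :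
    z = -1 / Sb + c * ∫ x : ℝ, (x : ℂ) / (1 + (x : ℂ) * Sb) ∂H := by
  have hz0 : z ≠ 0 := fun h => by simp [h] at hz
  have hSb0 : Sb ≠ 0 := fun h => by simp [h] at hSbim
  have hzSb : z * Sb = c - 1 + c * (z * S) := by
    rw [hSb]; field_simp; ring
  have hzS : 1 - (c : ℂ) - c * z * S = -z * Sb := by linear_combination hzSb
  have hintegrand : ∀ x : ℝ,
      1 / ((x : ℂ) * (1 - c - c * z * S) - z) = -z⁻¹ * (1 / (1 + (x : ℂ) * Sb)) := by
    intro x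
    rw [hzS, show (x : ℂ) * (-z * Sb) - z = -(z * (1 + x * Sb)) by ring]
    field_simp
  set t := ∫ x : ℝ, (x : ℂ) / (1 + (x : ℂ) * Sb) ∂H
  have hS : z * S = Sb * t - 1 := by
    rw [heq, integral_congr_ae (.of_forall hintegrand), integral_const_mul,
      Complex.integral_one_div_one_add_ofReal_mul H hSbim.ne', neg_mul, mul_neg,
      mul_inv_cancel_left₀ hz0]
    ring
  field_simp
  linear_combination hzSb + c * hS

/-- Algebraic reformulation of the Marčenko–Pastur equation: if the Stieltjes
transform `S` (with values in `ℂ⁺`) satisfies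
`S = ∫ 1/(x(1 - c - czS) - z) dH(x)` and `S̲ = -(1-c)/z + cS` (which is again a
Stieltjes transform, so `Im S̲ > 0`), then `z = -1/S̲ + c ∫ x/(1 + x S̲) dH(x)`. -/
theorem mp_equation_reformulation
    (H : Measure ℝ) [IsProbabilityMeasure H] (hH : ∀ᵐ x ∂H, 0 ≤ x)
    (c : ℝ) (hc : 0 < c)
    (z S Sb : ℂ) (hz : 0 < z.im) (hS : 0 < S.im)
    (hSb : Sb = -(1 - (c : ℂ)) / z + c * S) (hSbim : 0 < Sb.im)
    (heq : S = ∫ x : ℝ, 1 / ((x : ℂ) * (1 - c - c * z * S) - z) ∂H) :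
    z = -1 / Sb + c * ∫ x : ℝ, (x : ℂ) / (1 + (x : ℂ) * Sb) ∂H :=
  mp_equation_reformulation_general H c z S Sb hz hSb hSbim heq
end
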